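/- Let G be a finite group. The Radon transform is injective on G if and only if every irreducible finite-dimensional complex representation ρ of G has a nonzero fixed point, i.e. for every such ρ there exist x ∈ G with x ≠ 1 and a nonzero vector v with ρ(x) v = v. Equivalently, the Radon transform fails to be injective on G exactly when G admits a fixed-point-free irreducible complex representation. -/

import Mathlib

/-- The Radon transform of `f` at `(x, γ)`: the sum of `f` over the geodesic
determined by the homomorphism `γ : C_n → G`, translated by `x`. -/
noncomputable def radonSum {G : Type*} [Group G] {n : ℕ} [NeZero n]
    (f : G → ℂ) (γ : Multiplicative (ZMod n) →* G) (x : G) : ℂ :=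
  ∑ t : ZMod n, f (x * γ (Multiplicative.ofAdd t))

/-- All Radon transforms of `f` (over geodesics of all lengths `n ≥ 2`) vanish. -/
def RadonNull (G : Type*) [Group G] (f : G → ℂ) : Prop :=
  ∀ (n : ℕ) (hn : 2 ≤ n) (γ : Multiplicative (ZMod n) →* G), γ ≠ 1 → ∀ x : G,
    haveI : NeZero n := ⟨by omega⟩
    radonSum f γ x = 0

/-- The Radon transform is injective on `G`. -/
def RadonInjective (G : Type*) [Group G] : Prop :=
  ∀ f : G → ℂ, RadonNull G f → f = 0

/-!
A fixed-point-free representation `ρ` produces nonzero Radon-null functions, its matrix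
coefficients `y ↦ φ (ρ y v)`: along a nontrivial `γ`, the vector `∑ₜ ρ (γ t) v` is fixed by every
`ρ (γ s)`, hence zero. Conversely, the Radon-null functions form a subrepresentation of the right
regular representation on `G → ℂ`. If it is nonzero it contains an irreducible subrepresentation,
and a vector `u` in it fixed by some `x ≠ 1` is invariant under right translation by `⟨x⟩`; its
Radon transform along an isomorphism `ZMod (orderOf x) ≃ ⟨x⟩` is then `orderOf x • u`, so `u = 0`.
-/

namespace Representation

section FixedPointFree

variable {k G V W : Type*} [CommSemiring k] [Monoid G] [AddCommMonoid V] [Module k V]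
  [AddCommMonoid W] [Module k W]

def IsFixedPointFree (ρ : Representation k G V) : Prop :=
  ∀ x : G, x ≠ 1 → ∀ v : V, ρ x v = v → v = 0

theorem not_isFixedPointFree_iff {ρ : Representation k G V} :
    ¬ ρ.IsFixedPointFree ↔ ∃ (x : G) (v : V), x ≠ 1 ∧ v ≠ 0 ∧ ρ x v = v := by
  simp only [IsFixedPointFree, not_forall, exists_prop]
  exact exists_congr fun x => by tauto

theorem apply_sum_apply_comp {H : Type*} [Group H] [Fintype H] (ρ : Representation k G V)
    (γ : H →* G) (v : V) (s : H) : ρ (γ s) (∑ t, ρ (γ t) v) = ∑ t, ρ (γ t) v := by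
  simp only [map_sum, ← Module.End.mul_apply, ← map_mul]
  exact Equiv.sum_comp (Equiv.mulLeft s) fun t => ρ (γ t) v

theorem IsFixedPointFree.sum_apply_comp_eq_zero {H : Type*} [Group H] [Fintype H]
    {ρ : Representation k G V} (hρ : ρ.IsFixedPointFree) {γ : H →* G} (hγ : γ ≠ 1) (v : V) :
    ∑ t, ρ (γ t) v = 0 := by
  obtain ⟨s, hs⟩ : ∃ s, γ s ≠ 1 := by
    by_contra! h
    exact hγ (MonoidHom.ext h)
  exact hρ _ hs _ (apply_sum_apply_comp ρ γ v s)

def conj (ρ : Representation k G V) (e : V ≃ₗ[k] W) : Representation k G W :=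
  (e.conjAlgEquiv k).toMonoidHom.comp ρ

theorem conj_apply (ρ : Representation k G V) (e : V ≃ₗ[k] W) (x : G) (w : W) :
    ρ.conj e x w = e (ρ x (e.symm w)) :=
  rfl

theorem isFixedPointFree_conj_iff {ρ : Representation k G V} (e : V ≃ₗ[k] W) :
    (ρ.conj e).IsFixedPointFree ↔ ρ.IsFixedPointFree := by
  refine forall₂_congr fun x _ => ⟨fun h v hv => ?_, fun h w hw => ?_⟩
  · simpa using h (e v) (by simp [conj_apply, hv])
  · simpa using h (e.symm w) (by simpa [conj_apply, e.eq_symm_apply] using hw)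

end FixedPointFree

section Irreducible

variable {k G V W : Type*} [Field k] [Monoid G] [AddCommGroup V] [Module k V]
  [AddCommGroup W] [Module k W]

theorem isIrreducible_iff (ρ : Representation k G V) :
    ρ.IsIrreducible ↔ Nontrivial V ∧
      ∀ U : Submodule k V, (∀ x : G, ∀ v ∈ U, ρ x v ∈ U) → U = ⊥ ∨ U = ⊤ := by
  have hbot (σ : Subrepresentation ρ) : σ = ⊥ ↔ σ.toSubmodule = ⊥ :=
    Subrepresentation.toSubmodule_injective.eq_iff.symm
  have htop (σ : Subrepresentation ρ) : σ = ⊤ ↔ σ.toSubmodule = ⊤ :=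
    Subrepresentation.toSubmodule_injective.eq_iff.symm
  have hnt : Nontrivial (Subrepresentation ρ) ↔ Nontrivial V := by
    rw [← Submodule.nontrivial_iff k (M := V)]
    simp only [← not_subsingleton_iff_nontrivial, ← subsingleton_iff_bot_eq_top]
    exact Subrepresentation.toSubmodule_injective.eq_iff.symm.not
  rw [IsIrreducible, isSimpleOrder_iff, hnt]
  refine and_congr_right fun _ => ⟨fun h U hU => ?_, fun h σ => ?_⟩
  · simpa [hbot, htop] using h ⟨U, fun x v hv => hU x v hv⟩
  · simpa [hbot, htop] using h σ.toSubmodule σ.apply_mem_toSubmodule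

theorem IsIrreducible.conj {ρ : Representation k G V} (hρ : ρ.IsIrreducible) (e : V ≃ₗ[k] W) :
    (ρ.conj e).IsIrreducible := by
  obtain ⟨_, hρ⟩ := (isIrreducible_iff ρ).1 hρ
  refine (isIrreducible_iff _).2 ⟨e.symm.toEquiv.nontrivial, fun U hU => ?_⟩
  have hUe : ∀ x : G, ∀ v ∈ U.comap e.toLinearMap, ρ x v ∈ U.comap e.toLinearMap := by
    intro x v hv
    simpa [conj_apply] using hU x (e v) hv
  simpa [Submodule.comap_equiv_eq_map_symm, Submodule.map_eq_bot_iff] using hρ _ hUe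

end Irreducible

def rightRegular (k G : Type*) [CommSemiring k] [Monoid G] :
    Representation k G (G → k) where
  toFun a :=
    { toFun f y := f (y * a)
      map_add' _ _ := rfl
      map_smul' _ _ := rfl }
  map_one' := by ext; simp
  map_mul' _ _ := by ext; simp [mul_assoc]

@[simp]
theorem rightRegular_apply {k G : Type*} [CommSemiring k] [Monoid G] (a y : G)
    (f : G → k) : rightRegular k G a f y = f (y * a) :=
  rfl

end Representation

namespace Subrepresentation

variable {k G V : Type*} [Field k] [Monoid G] [AddCommGroup V] [Module k V]
  {ρ : Representation k G V}

theorem exists_isAtom_le [FiniteDimensional k V] {σ : Subrepresentation ρ} (hσ : σ ≠ ⊥) :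
    ∃ τ, IsAtom τ ∧ τ ≤ σ := by
  have : WellFoundedLT (Subrepresentation ρ) :=
    StrictMono.wellFoundedLT (f := toSubmodule) fun _ _ h => h
  have : IsAtomic (Subrepresentation ρ) := isAtomic_of_orderBot_wellFounded_lt wellFounded_lt
  exact (eq_bot_or_exists_atom_le σ).resolve_left hσ

theorem isIrreducible_toRepresentation_of_isAtom {σ : Subrepresentation ρ} (hσ : IsAtom σ) :
    σ.toRepresentation.IsIrreducible := by
  refine (Representation.isIrreducible_iff _).2
    ⟨Submodule.nontrivial_iff_ne_bot.2 fun h => hσ.1 (Subrepresentation.ext h), fun U hU => ?_⟩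
  let τ : Subrepresentation ρ := ⟨U.map σ.toSubmodule.subtype, by
    rintro x - ⟨u, hu, rfl⟩
    exact ⟨_, hU x u hu, rfl⟩⟩
  have hτ : τ ≤ σ := by
    rintro - ⟨u, -, rfl⟩
    exact u.2
  have hmap := Submodule.map_injective_of_injective σ.toSubmodule.injective_subtype
  rcases hσ.le_iff.1 hτ with h | h
  · exact .inl (hmap (by rw [Submodule.map_bot]; exact congrArg toSubmodule h))
  · exact .inr (hmap (by rw [Submodule.map_subtype_top]; exact congrArg toSubmodule h))

end Subrepresentation

section Radon

variable {G : Type*} [Group G]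

theorem radonNull_iff {f : G → ℂ} :
    RadonNull G f ↔ ∀ (n : ℕ) [NeZero n], 2 ≤ n → ∀ γ : Multiplicative (ZMod n) →* G, γ ≠ 1 →
      ∀ x, radonSum f γ x = 0 :=
  ⟨fun h n _ hn γ hγ x => h n hn γ hγ x, fun h n hn γ hγ x => @h n ⟨by omega⟩ hn γ hγ x⟩

variable {n : ℕ} [NeZero n]

theorem radonSum_eq_sum (f : G → ℂ) (γ : Multiplicative (ZMod n) →* G) (x : G) :
    radonSum f γ x = ∑ s, f (x * γ s) :=
  Equiv.sum_comp Multiplicative.ofAdd fun s => f (x * γ s)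

@[simp]
theorem radonSum_zero (γ : Multiplicative (ZMod n) →* G) (x : G) : radonSum 0 γ x = 0 := by
  simp [radonSum]

@[simp]
theorem radonSum_add (f g : G → ℂ) (γ : Multiplicative (ZMod n) →* G) (x : G) :
    radonSum (f + g) γ x = radonSum f γ x + radonSum g γ x := by
  simp [radonSum, Finset.sum_add_distrib]

@[simp]
theorem radonSum_smul (c : ℂ) (f : G → ℂ) (γ : Multiplicative (ZMod n) →* G) (x : G) :
    radonSum (c • f) γ x = c * radonSum f γ x := by
  simp [radonSum, Finset.mul_sum]

theorem radonSum_rightRegular (a : G) (f : G → ℂ) (γ : Multiplicative (ZMod n) →* G) (x : G) :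
    radonSum (Representation.rightRegular ℂ G a f) γ x =
      radonSum f ((MulAut.conj a⁻¹).toMonoidHom.comp γ) (x * a) := by
  simp only [radonSum_eq_sum]
  exact Finset.sum_congr rfl fun s _ => by simp [mul_assoc]

end Radon

def radonNullSubrep (G : Type*) [Group G] :
    Subrepresentation (Representation.rightRegular ℂ G) where
  toSubmodule :=
    { carrier := {f | RadonNull G f}
      add_mem' hf hg := radonNull_iff.2 fun n _ hn γ hγ x => by
        simp [radonNull_iff.1 hf n hn γ hγ x, radonNull_iff.1 hg n hn γ hγ x]
      zero_mem' := radonNull_iff.2 fun _ _ _ _ _ _ => radonSum_zero _ _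
      smul_mem' c _ hf := radonNull_iff.2 fun n _ hn γ hγ x => by
        simp [radonNull_iff.1 hf n hn γ hγ x] }
  apply_mem_toSubmodule a f hf := radonNull_iff.2 fun n _ hn γ hγ x => by
    rw [radonSum_rightRegular]
    refine radonNull_iff.1 hf n hn _ (fun h => hγ ?_) _
    rw [← MonoidHom.comp_one (MulAut.conj a⁻¹).toMonoidHom] at h
    exact (MonoidHom.cancel_left (MulAut.conj a⁻¹).injective).1 h

theorem radonNull_coeff_of_isFixedPointFree {G V : Type*} [Group G] [AddCommGroup V]
    [Module ℂ V] {ρ : Representation ℂ G V} (hρ : ρ.IsFixedPointFree) (φ : Module.Dual ℂ V)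
    (v : V) : RadonNull G fun y => φ (ρ y v) :=
  radonNull_iff.2 fun n _ _ γ hγ x => by
    simp only [radonSum_eq_sum, map_mul, Module.End.mul_apply, ← map_sum,
      hρ.sum_apply_comp_eq_zero hγ, map_zero]

theorem RadonNull.eq_zero_of_rightRegular_apply_eq {G : Type*} [Group G] [Finite G]
    {f : G → ℂ} (hf : RadonNull G f) {x : G} (hx : x ≠ 1)
    (hfx : Representation.rightRegular ℂ G x f = f) : f = 0 := by
  have hinv : ∀ z ∈ Subgroup.zpowers x, ∀ y, f (y * z) = f y := by
    intro z hz y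
    obtain ⟨k, rfl⟩ := mem_powers_iff_mem_zpowers.2 hz
    change Representation.rightRegular ℂ G (x ^ k) f y = f y
    rw [map_pow, Module.End.pow_apply, Function.iterate_fixed hfx]
  set n := Nat.card (Subgroup.zpowers x)
  have hn : 2 ≤ n := (Subgroup.one_lt_card_iff_ne_bot _).2 (Subgroup.zpowers_eq_bot.not.2 hx)
  have : NeZero n := ⟨by omega⟩
  let e := zmodCyclicMulEquiv (Subgroup.isCyclic_zpowers x)
  let γ := (Subgroup.zpowers x).subtype.comp e.toMonoidHom
  have hγ : γ ≠ 1 := by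
    obtain ⟨s, hs⟩ := e.surjective ⟨x, Subgroup.mem_zpowers x⟩
    exact fun h => hx (by simpa [γ, hs] using DFunLike.congr_fun h s)
  ext y
  have hsum : (n : ℂ) * f y = 0 := by
    rw [← radonNull_iff.1 hf n hn γ hγ y, radonSum_eq_sum,
      Finset.sum_congr rfl fun s _ => hinv (γ s) (e s).2 y, Finset.sum_const, Finset.card_univ,
      Fintype.card_multiplicative, ZMod.card, nsmul_eq_mul]
  simpa [NeZero.ne n] using hsum

theorem radonInjective_iff_forall_isIrreducible_not_isFixedPointFree {G : Type*} [Group G]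
    [Finite G] :
    RadonInjective G ↔ ∀ (V : Type) [AddCommGroup V] [Module ℂ V] [FiniteDimensional ℂ V]
      (ρ : Representation ℂ G V), ρ.IsIrreducible → ¬ ρ.IsFixedPointFree := by
  refine ⟨fun hinj V _ _ _ ρ hρ hfpf => ?_, fun h f hf => ?_⟩
  · have : Nontrivial V := ((Representation.isIrreducible_iff ρ).1 hρ).1
    obtain ⟨v, hv⟩ := exists_ne (0 : V)
    obtain ⟨φ, hφ⟩ : ∃ φ : Module.Dual ℂ V, φ v ≠ 0 := by
      simpa using (Module.forall_dual_apply_eq_zero_iff ℂ v).not.2 hv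
    exact hφ (by simpa using congrFun (hinj _ (radonNull_coeff_of_isFixedPointFree hfpf φ v)) 1)
  · by_contra hf0
    obtain ⟨σ, hσ, hσN⟩ := (radonNullSubrep G).exists_isAtom_le fun h => by
      have hf' : f ∈ (radonNullSubrep G).toSubmodule := hf
      rw [h] at hf'
      exact hf0 ((Submodule.mem_bot ℂ).1 hf')
    let e := (Module.finBasis ℂ σ.toSubmodule).equivFun
    refine h _ _ ((Subrepresentation.isIrreducible_toRepresentation_of_isAtom hσ).conj e)
      ((Representation.isFixedPointFree_conj_iff e).2 fun x hx u hu => Subtype.ext ?_)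
    exact RadonNull.eq_zero_of_rightRegular_apply_eq (hσN u.2) hx (congrArg Subtype.val hu)

theorem radon_injective_iff_no_fpf_rep {G : Type*} [Group G] [Fintype G] :
    RadonInjective G ↔
      ∀ (V : Type) [AddCommGroup V] [Module ℂ V] [FiniteDimensional ℂ V]
        (ρ : Representation ℂ G V),
        (Nontrivial V ∧
          ∀ W : Submodule ℂ V, (∀ x : G, ∀ v ∈ W, ρ x v ∈ W) → W = ⊥ ∨ W = ⊤) →
        ∃ (x : G) (v : V), x ≠ 1 ∧ v ≠ 0 ∧ ρ x v = v := by
  simpa only [Representation.isIrreducible_iff, Representation.not_isFixedPointFree_iff] using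
    radonInjective_iff_forall_isIrreducible_not_isFixedPointFree (G := G)
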